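/- arXiv:1602.02098 — 10 statements merged into one kernel-verified Lean document; each statement's English description precedes it below -/
import Mathlib

section
/- Assume there exists ε ∈ (0,1/2) such that p_i(0) ∈ [ε, 1−ε] for all i ∈ V, and that n_i ≤ n−1 for all i. Then under the COCA update, for every k ∈ ℕ, every agent i, and every j ∈ N_i, the interaction weight a_{ij}(k) = p_i(k)(1−p_i(k))/n_i satisfies a_{ij}(k) ∈ [ε(1−ε)/(n−1), 1/4], and the self-weight a_{ii}(k) = 1 − Σ_{j∈N_i} a_{ij}(k) satisfies a_{ii}(k) ∈ [3/4, 1 − ε(1−ε)]. -/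
/-- COCA model with initial opinions in `[ε, 1-ε]` and `n_i ≤ n-1`:
the interaction weights `a_{ij}(k) = p_i(k)(1-p_i(k))/n_i` lie in
`[ε(1-ε)/(n-1), 1/4]` and the self-weights lie in `[3/4, 1-ε(1-ε)]`. -/
theorem stmt_2
    (n : ℕ) (N : Fin n → Finset (Fin n))
    (hdeg : ∀ i, 1 ≤ (N i).card)
    (hni : ∀ i, (N i).card ≤ n - 1)
    (p : Fin n → ℕ → ℝ)
    (hupd : ∀ i k, p i (k + 1) =
      p i k + p i k * (1 - p i k) / (N i).card * ∑ j ∈ N i, (p j k - p i k))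
    (ε : ℝ) (hε : ε ∈ Set.Ioo (0 : ℝ) (1 / 2))
    (hp0 : ∀ i, p i 0 ∈ Set.Icc ε (1 - ε)) :
    ∀ k : ℕ, ∀ i : Fin n,
      (∀ j ∈ N i,
        ε * (1 - ε) / ((n : ℝ) - 1) ≤ p i k * (1 - p i k) / (N i).card ∧
        p i k * (1 - p i k) / (N i).card ≤ 1 / 4) ∧
      (3 / 4 ≤ 1 - ∑ j ∈ N i, p i k * (1 - p i k) / (N i).card ∧
        1 - ∑ j ∈ N i, p i k * (1 - p i k) / (N i).card ≤ 1 - ε * (1 - ε)) := by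
  obtain ⟨hε0, hε2⟩ := hε
  -- invariant: opinions stay in [ε, 1-ε]
  have key : ∀ k : ℕ, ∀ i : Fin n, ε ≤ p i k ∧ p i k ≤ 1 - ε := by
    intro k
    induction k with
    | zero => intro i; exact ⟨(hp0 i).1, (hp0 i).2⟩
    | succ k ih =>
      intro i
      have hc : (1:ℝ) ≤ ((N i).card : ℝ) := by exact_mod_cast hdeg i
      have hcpos : (0:ℝ) < ((N i).card : ℝ) := by linarith
      have hq := ih i
      have hS1 : ((N i).card : ℝ) * ε ≤ ∑ j ∈ N i, p j k := by
        calc ((N i).card : ℝ) * ε = ∑ _j ∈ N i, ε := by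
              rw [Finset.sum_const, nsmul_eq_mul]
          _ ≤ _ := Finset.sum_le_sum (fun j _ => (ih j).1)
      have hS2 : (∑ j ∈ N i, p j k) ≤ ((N i).card : ℝ) * (1 - ε) := by
        calc (∑ j ∈ N i, p j k) ≤ ∑ _j ∈ N i, (1 - ε) :=
              Finset.sum_le_sum (fun j _ => (ih j).2)
          _ = ((N i).card : ℝ) * (1 - ε) := by
              rw [Finset.sum_const, nsmul_eq_mul]
      set q := p i k with hqdef
      set S := ∑ j ∈ N i, p j k with hSdef
      have hA1 : ε ≤ S / ((N i).card : ℝ) := (le_div_iff₀ hcpos).2 (by linarith)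
      have hA2 : S / ((N i).card : ℝ) ≤ 1 - ε := (div_le_iff₀ hcpos).2 (by linarith)
      have hrw : p i (k+1) = q + q * (1 - q) * (S / ((N i).card : ℝ) - q) := by
        rw [hupd, Finset.sum_sub_distrib, Finset.sum_const, nsmul_eq_mul]
        field_simp
        try ring
      rw [hrw]
      set A := S / ((N i).card : ℝ) with hAdef
      have ht0 : 0 ≤ q * (1 - q) := mul_nonneg (by linarith) (by linarith)
      have ht1 : q * (1 - q) ≤ 1/4 := by nlinarith [sq_nonneg (q - 1/2)]
      constructor
      · nlinarith [mul_nonneg (sub_nonneg.2 hq.1) (by linarith : (0:ℝ) ≤ 1 - q * (1 - q)),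
          mul_nonneg ht0 (sub_nonneg.2 hA1)]
      · nlinarith [mul_nonneg (sub_nonneg.2 hq.2) (by linarith : (0:ℝ) ≤ 1 - q * (1 - q)),
          mul_nonneg ht0 (sub_nonneg.2 hA2)]
  intro k i
  have hq := key k i
  set q := p i k with hqdef
  have hc1 : (1:ℝ) ≤ ((N i).card : ℝ) := by exact_mod_cast hdeg i
  have hcpos : (0:ℝ) < ((N i).card : ℝ) := by linarith
  have hn2 : 2 ≤ n := by
    have h1 := hdeg i
    have h2 := hni i
    omega
  have hcn : ((N i).card : ℝ) ≤ (n : ℝ) - 1 := by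
    have : ((N i).card : ℝ) ≤ ((n - 1 : ℕ) : ℝ) := by exact_mod_cast hni i
    rwa [Nat.cast_sub (by omega), Nat.cast_one] at this
  have hlow : ε * (1 - ε) ≤ q * (1 - q) := by nlinarith [mul_nonneg (sub_nonneg.2 hq.1) (sub_nonneg.2 hq.2)]
  have hhigh : q * (1 - q) ≤ 1/4 := by nlinarith [sq_nonneg (q - 1/2)]
  have hεε : (0:ℝ) ≤ ε * (1 - ε) := mul_nonneg (le_of_lt hε0) (by linarith)
  have hwlow : ε * (1 - ε) / ((n : ℝ) - 1) ≤ q * (1 - q) / ((N i).card : ℝ) :=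
    div_le_div₀ (by nlinarith) hlow hcpos hcn
  have hwhigh : q * (1 - q) / ((N i).card : ℝ) ≤ 1 / 4 := by
    calc q * (1 - q) / ((N i).card : ℝ) ≤ q * (1 - q) / 1 :=
          div_le_div_of_nonneg_left (by nlinarith) (by norm_num) hc1
      _ ≤ 1/4 := by simpa using hhigh
  have hsum : ∑ _j ∈ N i, q * (1 - q) / ((N i).card : ℝ) = q * (1 - q) := by
    rw [Finset.sum_const, nsmul_eq_mul]
    field_simp
  refine ⟨fun j _ => ⟨hwlow, hwhigh⟩, ?_, ?_⟩
  · rw [hsum]; linarith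
  · rw [hsum]; linarith
end

section
/- Let i ∈ V with p_i(0) ∈ (0,1). Then for every k ∈ ℕ exactly one of the following holds: (1) p_i(k) < p_i(k+1) < r_i(k); (2) p_i(k) > p_i(k+1) > r_i(k); (3) p_i(k) = p_i(k+1) = r_i(k). Moreover p_i(k) ∈ (0,1) for all k ∈ ℕ. -/
lemma coda_step (x r : ℝ) (hx0 : 0 < x) (hx1 : x < 1) (hr0 : 0 ≤ r) (hr1 : r ≤ 1) :
    ((x < x + x*(1-x)*(r-x) ∧ x + x*(1-x)*(r-x) < r) ∨
     (x + x*(1-x)*(r-x) < x ∧ r < x + x*(1-x)*(r-x)) ∨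
     (x = x + x*(1-x)*(r-x) ∧ x + x*(1-x)*(r-x) = r)) ∧
    x + x*(1-x)*(r-x) ∈ Set.Ioo (0:ℝ) 1 := by
  have hq : 0 < x * (1 - x) := mul_pos hx0 (by linarith)
  have hlt1 : x * (1 - x) < 1 := by nlinarith
  rcases lt_trichotomy x r with h | h | h
  · constructor
    · left; constructor <;> nlinarith
    · constructor <;> nlinarith
  · subst h
    refine ⟨Or.inr (Or.inr ⟨by ring, by ring⟩), by constructor <;> nlinarith⟩
  · constructor
    · right; left; constructor <;> nlinarith
    · constructor <;> nlinarith

/-- CODA model: for an agent with `p_i(0) ∈ (0,1)`, at every step exactly one of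
`p_i(k) < p_i(k+1) < r_i(k)`, `p_i(k) > p_i(k+1) > r_i(k)`, or
`p_i(k) = p_i(k+1) = r_i(k)` holds, and `p_i(k) ∈ (0,1)` for all `k`. -/
theorem stmt_3
    (n : ℕ) (N : Fin n → Finset (Fin n))
    (hdeg : ∀ i, 1 ≤ (N i).card)
    (p : Fin n → ℕ → ℝ) (q : Fin n → ℕ → ℕ)
    (hq0 : ∀ i k, (p i k < 1 / 2 ∨ (p i k = 1 / 2 ∧ p i (k - 1) < 1 / 2)) → q i k = 0)
    (hq1 : ∀ i k, ¬(p i k < 1 / 2 ∨ (p i k = 1 / 2 ∧ p i (k - 1) < 1 / 2)) → q i k = 1)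
    (hupd : ∀ i k, p i (k + 1) =
      p i k + p i k * (1 - p i k) / (N i).card * ∑ j ∈ N i, ((q j k : ℝ) - p i k))
    (i : Fin n) (hp0 : p i 0 ∈ Set.Ioo (0 : ℝ) 1) :
    ∀ k : ℕ,
      ((p i k < p i (k + 1) ∧
          p i (k + 1) < ((((N i).filter fun j => q j k = 1).card : ℝ) / (N i).card)) ∨
        (p i (k + 1) < p i k ∧
          ((((N i).filter fun j => q j k = 1).card : ℝ) / (N i).card) < p i (k + 1)) ∨
        (p i k = p i (k + 1) ∧
          p i (k + 1) = ((((N i).filter fun j => q j k = 1).card : ℝ) / (N i).card))) ∧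
      p i k ∈ Set.Ioo (0 : ℝ) 1 := by
  have hc : 0 < ((N i).card : ℝ) := by exact_mod_cast Nat.lt_of_lt_of_le Nat.zero_lt_one (hdeg i)
  have hq01 : ∀ j k, q j k = 0 ∨ q j k = 1 := by
    intro j k
    by_cases h : (p j k < 1 / 2 ∨ (p j k = 1 / 2 ∧ p j (k - 1) < 1 / 2))
    · exact Or.inl (hq0 j k h)
    · exact Or.inr (hq1 j k h)
  have hsum : ∀ k, ∑ j ∈ N i, ((q j k : ℝ)) =
      (((N i).filter fun j => q j k = 1).card : ℝ) := by
    intro k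
    rw [Finset.card_filter]
    push_cast
    refine Finset.sum_congr rfl fun j hj => ?_
    rcases hq01 j k with h | h <;> simp [h]
  have hr : ∀ k, (0:ℝ) ≤ (((N i).filter fun j => q j k = 1).card : ℝ) / (N i).card ∧
      (((N i).filter fun j => q j k = 1).card : ℝ) / (N i).card ≤ 1 := by
    intro k
    constructor
    · positivity
    · rw [div_le_one hc]
      exact_mod_cast Finset.card_filter_le _ _
  have hupd' : ∀ k, p i (k + 1) = p i k + p i k * (1 - p i k) *
      ((((N i).filter fun j => q j k = 1).card : ℝ) / (N i).card - p i k) := by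
    intro k
    rw [hupd i k, Finset.sum_sub_distrib, hsum k, Finset.sum_const, nsmul_eq_mul]
    field_simp
  have key : ∀ k, p i k ∈ Set.Ioo (0:ℝ) 1 := by
    intro k
    induction k with
    | zero => exact hp0
    | succ m ih =>
      have := (coda_step (p i m) _ ih.1 ih.2 (hr m).1 (hr m).2).2
      rwa [← hupd' m] at this
  intro k
  have h := coda_step (p i k) _ (key k).1 (key k).2 (hr k).1 (hr k).2
  rw [← hupd' k] at h
  exact ⟨h.1, key k⟩
end

section
/- Let i ∈ V with p_i(0) ∈ (0,1). If the integer sequence (n_i^+(k))_{k≥0} is eventually constant, then the opinion sequence (p_i(k))_{k≥0} converges and its limit equals (lim_{k→∞} n_i^+(k))/n_i; in particular, if n_i ≤ n−1, this limit belongs to the finite set S = { k/m : k, m ∈ ℕ, k ≤ m ≤ n−1 }. -/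
open Filter

lemma coda_alg (x cc mm : ℝ) (hm : mm ≠ 0) :
    x + x * (1 - x) / mm * (cc - mm * x) = x + x * (1 - x) * (cc / mm - x) := by
  field_simp

/-- Half lemma: CODA recurrence starting below `r` converges to `r`. -/
lemma coda_half (r : ℝ) (hr1 : r ≤ 1) (a : ℕ → ℝ)
    (h0 : 0 < a 0) (har : a 0 ≤ r)
    (hrec : ∀ k, a (k + 1) = a k + a k * (1 - a k) * (r - a k)) :
    Tendsto a atTop (nhds r) := by
  have hbnd : ∀ k, 0 < a k ∧ a k ≤ r := by
    intro k
    induction k with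
    | zero => exact ⟨h0, har⟩
    | succ k ih =>
      obtain ⟨h1, h2⟩ := ih
      constructor
      · rw [hrec]
        nlinarith [mul_nonneg (mul_nonneg h1.le (by linarith : (0:ℝ) ≤ 1 - a k))
          (by linarith : (0:ℝ) ≤ r - a k)]
      · rw [hrec]
        nlinarith [mul_nonneg (by linarith : (0:ℝ) ≤ r - a k)
          (by nlinarith [sq_nonneg (a k - 1/2)] : (0:ℝ) ≤ 1 - a k * (1 - a k))]
  have hmono : Monotone a := by
    apply monotone_nat_of_le_succ
    intro k
    obtain ⟨h1, h2⟩ := hbnd k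
    rw [hrec]
    nlinarith [mul_nonneg (mul_nonneg h1.le (by linarith : (0:ℝ) ≤ 1 - a k))
      (by linarith : (0:ℝ) ≤ r - a k)]
  have hbdd : BddAbove (Set.range a) := ⟨r, by rintro x ⟨k, rfl⟩; exact (hbnd k).2⟩
  have ht := tendsto_atTop_ciSup hmono hbdd
  set L := ⨆ k, a k with hL
  have hL0 : 0 < L := lt_of_lt_of_le h0 (le_ciSup hbdd 0)
  have hLr : L ≤ r := ciSup_le fun k => (hbnd k).2
  have ht1 : Tendsto (fun k => a (k + 1)) atTop (nhds L) :=
    ht.comp (tendsto_add_atTop_nat 1)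
  have ht2 : Tendsto (fun k => a k + a k * (1 - a k) * (r - a k)) atTop
      (nhds (L + L * (1 - L) * (r - L))) :=
    ht.add ((ht.mul ((tendsto_const_nhds).sub ht)).mul ((tendsto_const_nhds).sub ht))
  have heq : L = L + L * (1 - L) * (r - L) := by
    apply tendsto_nhds_unique ht1
    simpa only [hrec] using ht2
  have hfix : L * (1 - L) * (r - L) = 0 := by linarith
  have : L = r := by
    rcases lt_or_eq_of_le hLr with h | h
    · exfalso
      have hL1 : L < 1 := lt_of_lt_of_le h hr1
      nlinarith [mul_pos (mul_pos hL0 (by linarith : (0:ℝ) < 1 - L))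
        (by linarith : (0:ℝ) < r - L)]
    · exact h
  rwa [this] at ht

lemma coda_tendsto (r : ℝ) (hr0 : 0 ≤ r) (hr1 : r ≤ 1) (a : ℕ → ℝ)
    (h0 : 0 < a 0) (h1 : a 0 < 1)
    (hrec : ∀ k, a (k + 1) = a k + a k * (1 - a k) * (r - a k)) :
    Tendsto a atTop (nhds r) := by
  rcases le_or_gt (a 0) r with h | h
  · exact coda_half r hr1 a h0 h hrec
  · have hb := coda_half (1 - r) (by linarith) (fun k => 1 - a k)
      (by show (0:ℝ) < 1 - a 0; linarith)
      (by show (1:ℝ) - a 0 ≤ 1 - r; linarith)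
      (by intro k; show (1:ℝ) - a (k+1) = _; rw [hrec]; ring)
    have : Tendsto (fun k => 1 - (1 - a k)) atTop (nhds (1 - (1 - r))) :=
      tendsto_const_nhds.sub hb
    simpa using this

/-- CODA model: if `n_i^+(k)` is eventually constant (with eventual value `c`),
then `p_i(k)` converges to `c / n_i`; if moreover `n_i ≤ n-1`, this limit lies in
`S = { a/m : a, m ∈ ℕ, a ≤ m ≤ n-1 }`. -/
theorem stmt_5
    (n : ℕ) (N : Fin n → Finset (Fin n))
    (hdeg : ∀ i, 1 ≤ (N i).card)
    (p : Fin n → ℕ → ℝ) (q : Fin n → ℕ → ℕ)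
    (hq0 : ∀ i k, (p i k < 1 / 2 ∨ (p i k = 1 / 2 ∧ p i (k - 1) < 1 / 2)) → q i k = 0)
    (hq1 : ∀ i k, ¬(p i k < 1 / 2 ∨ (p i k = 1 / 2 ∧ p i (k - 1) < 1 / 2)) → q i k = 1)
    (hupd : ∀ i k, p i (k + 1) =
      p i k + p i k * (1 - p i k) / (N i).card * ∑ j ∈ N i, ((q j k : ℝ) - p i k))
    (i : Fin n) (hp0 : p i 0 ∈ Set.Ioo (0 : ℝ) 1)
    (c K : ℕ) (hstat : ∀ k ≥ K, ((N i).filter fun j => q j k = 1).card = c) :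
    Filter.Tendsto (fun k => p i k) Filter.atTop (nhds ((c : ℝ) / (N i).card)) ∧
    ((N i).card ≤ n - 1 →
      ∃ a m : ℕ, a ≤ m ∧ m ≤ n - 1 ∧ (c : ℝ) / (N i).card = (a : ℝ) / (m : ℝ)) := by
  have hm : 0 < (N i).card := hdeg i
  have hmR : (0 : ℝ) < ((N i).card : ℝ) := by exact_mod_cast hm
  -- each q value is 0 or 1
  have hq01 : ∀ j k, q j k = 0 ∨ q j k = 1 := by
    intro j k
    by_cases h : p j k < 1 / 2 ∨ (p j k = 1 / 2 ∧ p j (k - 1) < 1 / 2)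
    · exact Or.inl (hq0 j k h)
    · exact Or.inr (hq1 j k h)
  -- the sum rewrites using the filter card
  have hsum : ∀ k, ∑ j ∈ N i, ((q j k : ℝ) - p i k)
      = (((N i).filter fun j => q j k = 1).card : ℝ) - ((N i).card : ℝ) * p i k := by
    intro k
    rw [Finset.sum_sub_distrib, Finset.sum_const, nsmul_eq_mul]
    have : ∑ j ∈ N i, ((q j k : ℝ)) = (((N i).filter fun j => q j k = 1).card : ℝ) := by
      rw [← Finset.sum_filter_add_sum_filter_not (N i) (fun j => q j k = 1)]
      have h1 : ∑ j ∈ (N i).filter (fun j => q j k = 1), ((q j k : ℝ))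
          = (((N i).filter fun j => q j k = 1).card : ℝ) := by
        rw [Finset.card_eq_sum_ones, Nat.cast_sum]
        refine Finset.sum_congr rfl fun j hj => ?_
        simp [(Finset.mem_filter.mp hj).2]
      have h2 : ∑ j ∈ (N i).filter (fun j => ¬ q j k = 1), ((q j k : ℝ)) = 0 := by
        refine Finset.sum_eq_zero fun j hj => ?_
        rcases hq01 j k with h | h
        · simp [h]
        · exact absurd h (Finset.mem_filter.mp hj).2
      rw [h1, h2, add_zero]
    rw [this]
  -- filter card bounded by m
  have hcard : ∀ k, (((N i).filter fun j => q j k = 1).card : ℕ) ≤ (N i).card :=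
    fun k => Finset.card_filter_le _ _
  -- invariant: p i k ∈ (0,1)
  have hinv : ∀ k, 0 < p i k ∧ p i k < 1 := by
    intro k
    induction k with
    | zero => exact ⟨hp0.1, hp0.2⟩
    | succ k ih =>
      obtain ⟨h1, h2⟩ := ih
      set ck : ℕ := ((N i).filter fun j => q j k = 1).card with hck
      have hck1 : (ck : ℝ) ≤ ((N i).card : ℝ) := by exact_mod_cast hcard k
      have hrew : p i (k + 1)
          = p i k + p i k * (1 - p i k) * ((ck : ℝ) / ((N i).card : ℝ) - p i k) := by
        rw [hupd i k, hsum k, ← hck, coda_alg _ _ _ hmR.ne']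
      have hr0 : (0 : ℝ) ≤ (ck : ℝ) / ((N i).card : ℝ) := by positivity
      have hr1 : (ck : ℝ) / ((N i).card : ℝ) ≤ 1 := by rw [div_le_one hmR]; exact hck1
      set rk : ℝ := (ck : ℝ) / ((N i).card : ℝ)
      constructor
      · rw [hrew]
        nlinarith [mul_nonneg (mul_nonneg h1.le (by linarith : (0:ℝ) ≤ 1 - p i k)) hr0,
          mul_pos h1 (by nlinarith [sq_nonneg (p i k - 1/2)] :
            (0:ℝ) < 1 - p i k * (1 - p i k))]
      · rw [hrew]
        nlinarith [mul_pos (by linarith : (0:ℝ) < 1 - p i k)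
          (by nlinarith [sq_nonneg (p i k - 1/2)] : (0:ℝ) < 1 - p i k * (rk - p i k))]
  have hc : c ≤ (N i).card := by rw [← hstat K (le_refl K)]; exact hcard K
  have hcR : (c : ℝ) ≤ ((N i).card : ℝ) := by exact_mod_cast hc
  set r : ℝ := (c : ℝ) / ((N i).card : ℝ) with hrdef
  have hr0 : 0 ≤ r := by positivity
  have hr1 : r ≤ 1 := by rw [hrdef, div_le_one hmR]; exact hcR
  -- shifted sequence
  have hrec : ∀ k, p i (k + K + 1)
      = p i (k + K) + p i (k + K) * (1 - p i (k + K)) * (r - p i (k + K)) := by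
    intro k
    rw [hupd i (k + K), hsum (k + K), hstat (k + K) (Nat.le_add_left K k),
      coda_alg _ _ _ hmR.ne']
  have ht : Tendsto (fun k => p i (k + K)) atTop (nhds r) := by
    apply coda_tendsto r hr0 hr1 (fun k => p i (k + K))
      (by simpa using (hinv K).1) (by simpa using (hinv K).2)
    intro k
    show p i (k + 1 + K) = _
    rw [show k + 1 + K = k + K + 1 by ring, hrec k]
  refine ⟨(tendsto_add_atTop_iff_nat K).mp ht, fun hmn => ⟨c, (N i).card, hc, hmn, rfl⟩⟩
end

section
/- Let i ∈ V with p_i(0) ∈ (0,1). If the opinion sequence (p_i(k))_{k≥0} converges to a limit p* ∈ (0,1), then the integer sequence (n_i^+(k))_{k≥0} is eventually constant and p* = (lim_{k→∞} n_i^+(k))/n_i. -/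
/-!
Writing `r(k) = n⁺(k)/n_i`, the update is the logistic step `p' = p + p(1-p)(r - p)`. Along a
convergent trajectory the increments tend to `0` while the gain `p(1-p)` tends to
`p*(1-p*) ≠ 0`, so `r(k) → p*`. Hence the integers `n⁺(k)` converge to `p* n_i`, and a
convergent integer sequence is eventually constant.
-/

open Filter Topology Finset

theorem Nat.exists_eventually_eq_of_tendsto_natCast {α : Type*} {l : Filter α} [l.NeBot]
    {u : α → ℕ} {x : ℝ} (h : Tendsto (fun k => (u k : ℝ)) l (𝓝 x)) :
    ∃ c : ℕ, x = c ∧ ∀ᶠ k in l, u k = c := by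
  obtain ⟨c, rfl⟩ : x ∈ Set.range ((↑) : ℕ → ℝ) :=
    Nat.isClosedEmbedding_coe_real.isClosed_range.mem_of_tendsto h
      (Eventually.of_forall fun k => ⟨u k, rfl⟩)
  have hc : Tendsto u l (𝓝 c) := Nat.isClosedEmbedding_coe_real.tendsto_nhds_iff.mpr h
  exact ⟨c, rfl, by rwa [nhds_discrete, tendsto_pure] at hc⟩

theorem Finset.sum_natCast_eq_card_filter_eq_one {ι R : Type*} [Semiring R] {s : Finset ι}
    {f : ι → ℕ} (hf : ∀ j ∈ s, f j = 0 ∨ f j = 1) :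
    ∑ j ∈ s, (f j : R) = #(s.filter fun j => f j = 1) := by
  rw [← Finset.sum_boole]
  refine Finset.sum_congr rfl fun j hj => ?_
  rcases hf j hj with h | h <;> simp [h]

theorem tendsto_target_of_logistic_step {x r : ℕ → ℝ} {a : ℝ}
    (hstep : ∀ k, x (k + 1) = x k + x k * (1 - x k) * (r k - x k))
    (hx : Tendsto x atTop (𝓝 a)) (ha : a * (1 - a) ≠ 0) :
    Tendsto r atTop (𝓝 a) := by
  have hgain : Tendsto (fun k => x k * (1 - x k)) atTop (𝓝 (a * (1 - a))) :=
    hx.mul (tendsto_const_nhds.sub hx)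
  have hincr : Tendsto (fun k => x (k + 1) - x k) atTop (𝓝 0) := by
    simpa using (hx.comp (tendsto_add_atTop_nat 1)).sub hx
  have hr : ∀ᶠ k in atTop, (x (k + 1) - x k) / (x k * (1 - x k)) + x k = r k := by
    filter_upwards [hgain.eventually_ne ha] with k hk
    rw [hstep k, add_sub_cancel_left, mul_div_cancel_left₀ _ hk, sub_add_cancel]
  simpa using ((hincr.div hgain ha).add hx).congr' hr

theorem stmt_6_general
    (n : ℕ) (N : Fin n → Finset (Fin n))
    (hdeg : ∀ i, 1 ≤ (N i).card)
    (p : Fin n → ℕ → ℝ) (q : Fin n → ℕ → ℕ)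
    (hq0 : ∀ i k, (p i k < 1 / 2 ∨ (p i k = 1 / 2 ∧ p i (k - 1) < 1 / 2)) → q i k = 0)
    (hq1 : ∀ i k, ¬(p i k < 1 / 2 ∨ (p i k = 1 / 2 ∧ p i (k - 1) < 1 / 2)) → q i k = 1)
    (hupd : ∀ i k, p i (k + 1) =
      p i k + p i k * (1 - p i k) / (N i).card * ∑ j ∈ N i, ((q j k : ℝ) - p i k))
    (i : Fin n)
    (pstar : ℝ) (hpstar : pstar ∈ Set.Ioo (0 : ℝ) 1)
    (hconv : Filter.Tendsto (fun k => p i k) Filter.atTop (nhds pstar)) :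
    ∃ c K : ℕ, (∀ k ≥ K, ((N i).filter fun j => q j k = 1).card = c) ∧
      pstar = (c : ℝ) / (N i).card := by
  set nplus : ℕ → ℕ := fun k => #((N i).filter fun j => q j k = 1)
  have hm : (#(N i) : ℝ) ≠ 0 := by exact_mod_cast (Nat.one_le_iff_ne_zero.mp (hdeg i))
  have haction : ∀ j k, q j k = 0 ∨ q j k = 1 := fun j k => by
    by_cases h : p j k < 1 / 2 ∨ (p j k = 1 / 2 ∧ p j (k - 1) < 1 / 2)
    exacts [.inl (hq0 j k h), .inr (hq1 j k h)]
  have hstep : ∀ k, p i (k + 1) = p i k + p i k * (1 - p i k) * (nplus k / #(N i) - p i k) := by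
    intro k
    rw [hupd i k, sum_sub_distrib,
      sum_natCast_eq_card_filter_eq_one fun j _ => haction j k, sum_const, nsmul_eq_mul]
    simp only [nplus]
    field_simp
  have hratio : Tendsto (fun k => (nplus k : ℝ) / #(N i)) atTop (𝓝 pstar) :=
    tendsto_target_of_logistic_step hstep hconv
      (mul_ne_zero hpstar.1.ne' (sub_ne_zero.mpr hpstar.2.ne'))
  have hcount : Tendsto (fun k => (nplus k : ℝ)) atTop (𝓝 (pstar * #(N i))) :=
    (hratio.mul_const (#(N i) : ℝ)).congr fun k => div_mul_cancel₀ _ hm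
  obtain ⟨c, hc, hev⟩ := Nat.exists_eventually_eq_of_tendsto_natCast hcount
  obtain ⟨K, hK⟩ := eventually_atTop.mp hev
  exact ⟨c, K, hK, by rw [← hc, mul_div_cancel_right₀ _ hm]⟩

/-- CODA model (converse direction): if `p_i(k)` converges to a limit `p* ∈ (0,1)`,
then `n_i^+(k)` is eventually constant and `p* = (lim n_i^+(k)) / n_i`. -/
theorem stmt_6
    (n : ℕ) (N : Fin n → Finset (Fin n))
    (hdeg : ∀ i, 1 ≤ (N i).card)
    (p : Fin n → ℕ → ℝ) (q : Fin n → ℕ → ℕ)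
    (hq0 : ∀ i k, (p i k < 1 / 2 ∨ (p i k = 1 / 2 ∧ p i (k - 1) < 1 / 2)) → q i k = 0)
    (hq1 : ∀ i k, ¬(p i k < 1 / 2 ∨ (p i k = 1 / 2 ∧ p i (k - 1) < 1 / 2)) → q i k = 1)
    (hupd : ∀ i k, p i (k + 1) =
      p i k + p i k * (1 - p i k) / (N i).card * ∑ j ∈ N i, ((q j k : ℝ) - p i k))
    (i : Fin n) (hp0 : p i 0 ∈ Set.Ioo (0 : ℝ) 1)
    (pstar : ℝ) (hpstar : pstar ∈ Set.Ioo (0 : ℝ) 1)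
    (hconv : Filter.Tendsto (fun k => p i k) Filter.atTop (nhds pstar)) :
    ∃ c K : ℕ, (∀ k ≥ K, ((N i).filter fun j => q j k = 1).card = c) ∧
      pstar = (c : ℝ) / (N i).card :=
  stmt_6_general n N hdeg p q hq0 hq1 hupd i pstar hpstar hconv
end

section
/- Suppose p_i(0) ∈ (0,1) for all i ∈ V, and let A ⊆ V be a robust polarized cluster such that q_i(0) = 0 for some (hence every) i ∈ A. Then for every i ∈ A and every k ∈ ℕ one has q_i(k) = 0, and consequently p_i(k) ≤ 1/2 for all k ∈ ℕ and limsup_{k→∞} p_i(k) ≤ 1/2. -/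
/-- CODA model: a robust polarized cluster `A` whose agents start with action `0`
keeps action `0` forever; consequently each of its opinions stays `≤ 1/2` and
has `limsup ≤ 1/2`. -/
theorem stmt_8
    (n : ℕ) (N : Fin n → Finset (Fin n))
    (hdeg : ∀ i, 1 ≤ (N i).card)
    (p : Fin n → ℕ → ℝ) (q : Fin n → ℕ → ℕ)
    (hq0 : ∀ i k, (p i k < 1 / 2 ∨ (p i k = 1 / 2 ∧ p i (k - 1) < 1 / 2)) → q i k = 0)
    (hq1 : ∀ i k, ¬(p i k < 1 / 2 ∨ (p i k = 1 / 2 ∧ p i (k - 1) < 1 / 2)) → q i k = 1)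
    (hupd : ∀ i k, p i (k + 1) =
      p i k + p i k * (1 - p i k) / (N i).card * ∑ j ∈ N i, ((q j k : ℝ) - p i k))
    (hp0 : ∀ i, p i 0 ∈ Set.Ioo (0 : ℝ) 1)
    (A : Finset (Fin n))
    (hsame : ∀ i ∈ A, ∀ j ∈ A, q i 0 = q j 0)
    (hrob : ∀ i ∈ A, (N i \ A).card ≤ ((N i) ∩ A).card)
    (hzero : ∃ i ∈ A, q i 0 = 0) :
    ∀ i ∈ A, (∀ k : ℕ, q i k = 0 ∧ p i k ≤ 1 / 2) ∧
      Filter.limsup (fun k => p i k) Filter.atTop ≤ 1 / 2 := by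
  -- q values are always 0 or 1
  have hqle : ∀ j k, q j k ≤ 1 := by
    intro j k
    by_cases h : (p j k < 1 / 2 ∨ (p j k = 1 / 2 ∧ p j (k - 1) < 1 / 2))
    · rw [hq0 j k h]; omega
    · rw [hq1 j k h]
  -- main invariant
  have H : ∀ k, ∀ i ∈ A, 0 < p i k ∧ p i k < 1 / 2 := by
    intro k
    induction k with
    | zero =>
      intro i hi
      obtain ⟨j, hj, hjq⟩ := hzero
      have hiq : q i 0 = 0 := by rw [hsame i hi j hj, hjq]
      have hc : p i 0 < 1 / 2 ∨ (p i 0 = 1 / 2 ∧ p i (0 - 1) < 1 / 2) := by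
        by_contra hc
        have := hq1 i 0 hc
        omega
      refine ⟨(hp0 i).1, ?_⟩
      rcases hc with h | ⟨h1, h2⟩
      · exact h
      · simp only [Nat.zero_sub] at h2; linarith
    | succ k ih =>
      intro i hi
      have hpk := ih i hi
      -- all in-A neighbors have action 0
      have hqA : ∀ j ∈ N i ∩ A, (q j k : ℝ) = 0 := by
        intro j hj
        have hjA : j ∈ A := (Finset.mem_inter.mp hj).2
        rw [hq0 j k (Or.inl (ih j hjA).2)]
        simp
      set S : ℝ := ∑ j ∈ N i, (q j k : ℝ) with hS
      have hScard : (N i ∩ A).card + (N i \ A).card = (N i).card :=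
        Finset.card_inter_add_card_sdiff _ _
      have hSsplit : S = ∑ j ∈ N i ∩ A, (q j k : ℝ) + ∑ j ∈ N i \ A, (q j k : ℝ) :=
        (Finset.sum_inter_add_sum_sdiff _ _ _).symm
      have hSA : ∑ j ∈ N i ∩ A, (q j k : ℝ) = 0 := Finset.sum_eq_zero hqA
      have hSB : ∑ j ∈ N i \ A, (q j k : ℝ) ≤ (N i \ A).card := by
        have h := Finset.sum_le_sum (fun j _ => by exact_mod_cast hqle j k :
          ∀ j ∈ N i \ A, (q j k : ℝ) ≤ 1)
        simpa using h
      have hS0 : 0 ≤ S := Finset.sum_nonneg fun j _ => by positivity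
      have h2S : 2 * S ≤ ((N i).card : ℝ) := by
        have hr := hrob i hi
        have : S ≤ ((N i \ A).card : ℝ) := by rw [hSsplit, hSA]; linarith
        have hr' : ((N i \ A).card : ℝ) ≤ ((N i ∩ A).card : ℝ) := by exact_mod_cast hr
        have hc' : ((N i ∩ A).card : ℝ) + ((N i \ A).card : ℝ) = ((N i).card : ℝ) := by
          exact_mod_cast hScard
        linarith
      have hn : (0 : ℝ) < ((N i).card : ℝ) := by exact_mod_cast hdeg i
      have hsum : ∑ j ∈ N i, ((q j k : ℝ) - p i k) = S - ((N i).card : ℝ) * p i k := by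
        rw [Finset.sum_sub_distrib, Finset.sum_const, nsmul_eq_mul]
      have hupd' : p i (k + 1) * ((N i).card : ℝ) =
          p i k * ((N i).card : ℝ) + p i k * (1 - p i k) * (S - ((N i).card : ℝ) * p i k) := by
        rw [hupd i k, hsum]
        field_simp
      set x := p i k
      set y := p i (k + 1)
      set c : ℝ := ((N i).card : ℝ)
      have h1 : 0 < y := by
        nlinarith [mul_pos hpk.1 (by nlinarith : (0:ℝ) < 1 - x * (1 - x)),
          mul_nonneg (mul_nonneg hpk.1.le (by linarith : (0:ℝ) ≤ 1 - x)) hS0]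
      refine ⟨h1, ?_⟩
      nlinarith [mul_pos (by linarith : (0:ℝ) < 1/2 - x)
          (by nlinarith : (0:ℝ) < 1 - x * (1 - x)),
        mul_nonneg (mul_nonneg hpk.1.le (by linarith : (0:ℝ) ≤ 1 - x))
          (by linarith : (0:ℝ) ≤ c - 2 * S)]
  intro i hi
  have hkey : ∀ k : ℕ, q i k = 0 ∧ p i k ≤ 1 / 2 := fun k =>
    ⟨hq0 i k (Or.inl (H k i hi).2), (H k i hi).2.le⟩
  refine ⟨hkey, ?_⟩
  refine Filter.limsup_le_of_le ?_ (Filter.Eventually.of_forall fun k => (hkey k).2)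
  exact Filter.isCoboundedUnder_le_of_le Filter.atTop fun k => (H k i hi).1.le
end

section
/- Let i ∈ V with p_i(0) ∈ (0,1), and suppose there exists T_i ∈ ℕ such that n_i^−(k) > n_i^+(k) for all k ≥ T_i. Then there exists k* ≥ T_i such that q_i(k) = 0 for all k ≥ k*. -/
/-!
Writing `r` for the fraction of in-neighbours of `i` playing `1`, the opinion of `i` follows
`x ↦ x + x(1 - x)(r - x)`, which keeps `(0, 1)` invariant. A strict majority for `0` among `m`
neighbours means `r ≤ 1/2 - 1/(2m)`. While `x ≥ 1/2` the opinion then decreases, so it stays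
below its value `x_T < 1` and each step lowers it by at least `(1 - x_T)/(4m)`: it drops below
`1/2` after finitely many steps. Once below `1/2` it stays there, because `r ≤ 1/2` and
`1/2 - (x + x(1 - x)(1/2 - x)) = (1/2 - x)(1 - x(1 - x)) > 0`.
-/

open Set
open scoped Finset

theorem Finset.sum_natCast_eq_card_filter_of_le_one {ι : Type*} {s : Finset ι} {f : ι → ℕ}
    (hf : ∀ j ∈ s, f j ≤ 1) : ∑ j ∈ s, (f j : ℝ) = #(s.filter fun j => f j = 1) := by
  rw [Finset.card_filter, Nat.cast_sum]
  refine Finset.sum_congr rfl fun j hj => ?_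
  rcases Nat.le_one_iff_eq_zero_or_eq_one.mp (hf j hj) with h | h <;> simp [h]

namespace Coda

def step (r x : ℝ) : ℝ := x + x * (1 - x) * (r - x)

theorem step_eq_of_card {m c : ℕ} {x : ℝ} (hm : m ≠ 0) :
    x + x * (1 - x) / m * ((c : ℝ) - m * x) = step ((c : ℝ) / m) x := by
  unfold step
  field_simp

theorem div_add_le_half_of_lt_sub {m c : ℕ} (h : c < m - c) :
    (c : ℝ) / m + 1 / (2 * m) ≤ 1 / 2 := by
  have hm : (0 : ℝ) < m := by exact_mod_cast (show 0 < m by omega)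
  have hcm : (2 * c + 1 : ℝ) ≤ m := by exact_mod_cast (show 2 * c + 1 ≤ m by omega)
  rw [div_add_div _ _ hm.ne' (by positivity), div_le_div_iff₀ (by positivity) two_pos]
  nlinarith

theorem step_mem_Ioo {r x : ℝ} (hr : r ∈ Icc 0 1) (hx : x ∈ Ioo 0 1) : step r x ∈ Ioo 0 1 := by
  obtain ⟨hr0, hr1⟩ := hr
  obtain ⟨hx0, hx1⟩ := hx
  have hlo : step r x = x * (1 - x * (1 - x) + (1 - x) * r) := by unfold step; ring
  have hhi : 1 - step r x = (1 - x) * (1 - x * r + x ^ 2) := by unfold step; ring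
  constructor
  · rw [hlo]
    exact mul_pos hx0 (by nlinarith [mul_nonneg (by linarith : 0 ≤ 1 - x) hr0])
  · have : 0 < 1 - step r x := by
      rw [hhi]
      exact mul_pos (by linarith) (by nlinarith [mul_le_mul_of_nonneg_left hr1 hx0.le])
    linarith

theorem step_lt_half {r x : ℝ} (hr : r ≤ 1 / 2) (hx0 : 0 ≤ x) (hx : x < 1 / 2) :
    step r x < 1 / 2 := by
  have hx01 : 0 ≤ x * (1 - x) := mul_nonneg hx0 (by linarith)
  have hgap : 0 < (1 / 2 - x) * (1 - x * (1 - x)) :=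
    mul_pos (by linarith) (by nlinarith)
  calc step r x ≤ x + x * (1 - x) * (1 / 2 - x) := by unfold step; gcongr
    _ = 1 / 2 - (1 / 2 - x) * (1 - x * (1 - x)) := by ring
    _ < 1 / 2 := by linarith

theorem step_le_sub {r x b ε : ℝ} (hε : 0 ≤ ε) (hr : r + ε ≤ x) (hx : 1 / 2 ≤ x)
    (hxb : x ≤ b) (hb : b ≤ 1) : step r x ≤ x - (1 - b) * ε / 2 := by
  have hx01 : (1 - b) / 2 ≤ x * (1 - x) := by nlinarith
  have : (1 - b) / 2 * ε ≤ x * (1 - x) * (x - r) := by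
    gcongr
    · nlinarith
    · linarith
  unfold step
  linarith

variable {x r : ℕ → ℝ}

theorem mem_Ioo_of_step (hx : ∀ k, x (k + 1) = step (r k) (x k)) (hr : ∀ k, r k ∈ Icc 0 1)
    (h0 : x 0 ∈ Ioo 0 1) (k : ℕ) : x k ∈ Ioo 0 1 := by
  induction k with
  | zero => exact h0
  | succ k ih => rw [hx]; exact step_mem_Ioo (hr k) ih

theorem exists_lt_half_of_step (hx : ∀ k, x (k + 1) = step (r k) (x k))
    (hIoo : ∀ k, x k ∈ Ioo 0 1) {T : ℕ} {ε : ℝ} (hε : 0 < ε)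
    (hr : ∀ k ≥ T, r k + ε ≤ 1 / 2) : ∃ k ≥ T, x k < 1 / 2 := by
  by_contra! hge
  set δ := (1 - x T) * ε / 2
  have hδ : 0 < δ := by have := (hIoo T).2; positivity
  have hdec : ∀ d : ℕ, x (T + d) ≤ x T - d * δ := by
    intro d
    induction d with
    | zero => simp
    | succ d ih =>
      have hd := Nat.le_add_right T d
      have hle : x (T + d) ≤ x T := by nlinarith [(Nat.cast_nonneg d : (0 : ℝ) ≤ d)]
      have hstep : x (T + d + 1) ≤ x (T + d) - δ := by
        rw [hx]
        exact step_le_sub hε.le (by linarith [hr _ hd, hge _ hd]) (hge _ hd) hle (hIoo T).2.le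
      push_cast
      rw [← add_assoc]
      linarith
  obtain ⟨d, hd⟩ := exists_nat_gt ((x T - 1 / 2) / δ)
  rw [div_lt_iff₀ hδ] at hd
  linarith [hdec d, hge (T + d) (Nat.le_add_right T d)]

theorem lt_half_of_step (hx : ∀ k, x (k + 1) = step (r k) (x k)) (hx0 : ∀ k, 0 ≤ x k)
    {k₀ : ℕ} (hr : ∀ k ≥ k₀, r k ≤ 1 / 2) (hk₀ : x k₀ < 1 / 2) : ∀ k ≥ k₀, x k < 1 / 2 := by
  intro k hk
  induction k, hk using Nat.le_induction with
  | base => exact hk₀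
  | succ k hk ih => rw [hx]; exact step_lt_half (hr k hk) (hx0 k) ih

theorem eventually_lt_half_of_step (hx : ∀ k, x (k + 1) = step (r k) (x k))
    (hIoo : ∀ k, x k ∈ Ioo 0 1) {T : ℕ} {ε : ℝ} (hε : 0 < ε)
    (hr : ∀ k ≥ T, r k + ε ≤ 1 / 2) : ∃ k₀ ≥ T, ∀ k ≥ k₀, x k < 1 / 2 := by
  obtain ⟨k₀, hk₀T, hk₀⟩ := exists_lt_half_of_step hx hIoo hε hr
  refine ⟨k₀, hk₀T, lt_half_of_step hx (fun k => (hIoo k).1.le) (fun k hk => ?_) hk₀⟩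
  linarith [hr k (hk₀T.trans hk)]

end Coda

theorem stmt_11_general
    (n : ℕ) (N : Fin n → Finset (Fin n))
    (p : Fin n → ℕ → ℝ) (q : Fin n → ℕ → ℕ)
    (hq0 : ∀ i k, (p i k < 1 / 2 ∨ (p i k = 1 / 2 ∧ p i (k - 1) < 1 / 2)) → q i k = 0)
    (hq1 : ∀ i k, ¬(p i k < 1 / 2 ∨ (p i k = 1 / 2 ∧ p i (k - 1) < 1 / 2)) → q i k = 1)
    (hupd : ∀ i k, p i (k + 1) =
      p i k + p i k * (1 - p i k) / (N i).card * ∑ j ∈ N i, ((q j k : ℝ) - p i k))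
    (i : Fin n) (hp0 : p i 0 ∈ Set.Ioo (0 : ℝ) 1)
    (T : ℕ)
    (hmaj : ∀ k ≥ T, ((N i).filter fun j => q j k = 1).card <
      (N i).card - ((N i).filter fun j => q j k = 1).card) :
    ∃ kstar : ℕ, T ≤ kstar ∧ ∀ k ≥ kstar, q i k = 0 := by
  set m := #(N i)
  set c : ℕ → ℕ := fun k => #((N i).filter fun j => q j k = 1)
  have hm : m ≠ 0 := by have := hmaj T le_rfl; omega
  have hq01 : ∀ j k, q j k ≤ 1 := fun j k => by
    by_cases h : p j k < 1 / 2 ∨ (p j k = 1 / 2 ∧ p j (k - 1) < 1 / 2)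
    · simp [hq0 j k h]
    · simp [hq1 j k h]
  have hstep : ∀ k, p i (k + 1) = Coda.step ((c k : ℝ) / m) (p i k) := fun k => by
    rw [hupd, Finset.sum_sub_distrib, Finset.sum_natCast_eq_card_filter_of_le_one
      (fun j _ => hq01 j k), Finset.sum_const, nsmul_eq_mul]
    exact Coda.step_eq_of_card hm
  have hr : ∀ k, (c k : ℝ) / m ∈ Icc 0 1 := fun k =>
    ⟨by positivity, div_le_one_of_le₀ (by exact_mod_cast Finset.card_filter_le _ _) (by positivity)⟩
  obtain ⟨k₀, hk₀T, hk₀⟩ := Coda.eventually_lt_half_of_step hstep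
    (Coda.mem_Ioo_of_step hstep hr hp0) (by positivity : (0 : ℝ) < 1 / (2 * m))
    (fun k hk => Coda.div_add_le_half_of_lt_sub (hmaj k hk))
  exact ⟨k₀, hk₀T, fun k hk => hq0 i k (Or.inl (hk₀ k hk))⟩

/-- CODA model: if from some time `T_i` on, `n_i^-(k) > n_i^+(k)` always holds, then
agent `i` eventually adopts action `0` forever. -/
theorem stmt_11
    (n : ℕ) (N : Fin n → Finset (Fin n))
    (hdeg : ∀ i, 1 ≤ (N i).card)
    (p : Fin n → ℕ → ℝ) (q : Fin n → ℕ → ℕ)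
    (hq0 : ∀ i k, (p i k < 1 / 2 ∨ (p i k = 1 / 2 ∧ p i (k - 1) < 1 / 2)) → q i k = 0)
    (hq1 : ∀ i k, ¬(p i k < 1 / 2 ∨ (p i k = 1 / 2 ∧ p i (k - 1) < 1 / 2)) → q i k = 1)
    (hupd : ∀ i k, p i (k + 1) =
      p i k + p i k * (1 - p i k) / (N i).card * ∑ j ∈ N i, ((q j k : ℝ) - p i k))
    (i : Fin n) (hp0 : p i 0 ∈ Set.Ioo (0 : ℝ) 1)
    (T : ℕ)
    (hmaj : ∀ k ≥ T, ((N i).filter fun j => q j k = 1).card <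
      (N i).card - ((N i).filter fun j => q j k = 1).card) :
    ∃ kstar : ℕ, T ≤ kstar ∧ ∀ k ≥ kstar, q i k = 0 :=
  stmt_11_general n N p q hq0 hq1 hupd i hp0 T hmaj
end

section
/- Suppose p_i(0) ∈ (0,1) for all i ∈ V, and let A_1, A_2, …, A_d ⊆ V be sets such that: (i) A_1 is a robust polarized cluster with q_i(0) = 0 for every i ∈ A_1; (ii) for every h ∈ {1,…,d−1} and every i ∈ A_{h+1}, |N_i ∩ A_h| > |N_i \ A_h|. Then for every h ∈ {1,…,d} there exists T_h ∈ ℕ (with T_1 = 0) such that q_i(k) = 0 for all k ≥ T_h and all i ∈ A_h. Consequently, limsup_{k→∞} p_i(k) ≤ 1/2 for every i ∈ A_1 ∪ … ∪ A_d. -/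
/-!
Write `f` for the share of an agent's in-neighbours playing action `1`; the CODA update is then
`x ↦ x + x (1 - x) (f - x)`. While `f ≤ 1/2`, an opinion below `1/2` stays below `1/2`; while
`f ≤ 1/2 - ε`, an opinion at or above `1/2` has its distance `1 - x` to `1` multiplied by at least
`1 + ε/2` at every step, which cannot go on forever, so it eventually drops below `1/2` and then
stays there. In a robust cluster whose opinions all start below `1/2`, at most half of every
member's neighbours play `1`, so the cluster is frozen at action `0` from time `0` on. Once a set
`B` has settled below `1/2`, every agent with a strict majority of neighbours in `B` sees a share
at most `1/2 - 1/(2 nᵢ)`, hence settles as well; this propagates the cluster layer by layer.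
-/

open Finset Filter

noncomputable section

def codaStep (x f : ℝ) : ℝ := x + x * (1 - x) * (f - x)

lemma codaStep_mem_Ioo {x f : ℝ} (hx : x ∈ Set.Ioo 0 1) (hf : f ∈ Set.Icc 0 1) :
    codaStep x f ∈ Set.Ioo 0 1 := by
  obtain ⟨hx0, hx1⟩ := hx
  obtain ⟨hf0, hf1⟩ := hf
  have hx1' : 0 < 1 - x := by linarith
  constructor <;> unfold codaStep <;> nlinarith [mul_pos hx0 hx1', mul_pos hx0 (mul_pos hx0 hx1'),
    mul_pos hx1' (mul_pos hx0 hx1'), mul_nonneg (mul_pos hx0 hx1').le hf0,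
    mul_nonneg (mul_pos hx0 hx1').le (sub_nonneg.2 hf1)]

lemma codaStep_lt_half {x f : ℝ} (hx0 : 0 ≤ x) (hx : x < 1 / 2) (hf : f ≤ 1 / 2) :
    codaStep x f < 1 / 2 := by
  have hvar : 0 ≤ x * (1 - x) := mul_nonneg hx0 (by linarith)
  have : x * (1 - x) * (f - x) ≤ x * (1 - x) * (1 / 2 - x) :=
    mul_le_mul_of_nonneg_left (by linarith) hvar
  unfold codaStep
  nlinarith [mul_pos (by linarith : (0 : ℝ) < 1 / 2 - x) (by nlinarith : (0 : ℝ) < 1 - x * (1 - x))]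

-- `1 - codaStep x f = (1 - x) (1 + x (x - f))` and `x (x - f) ≥ ε / 2`.
lemma one_add_half_mul_le_one_sub_codaStep {x f ε : ℝ} (hx : 1 / 2 ≤ x) (hx1 : x ≤ 1)
    (hε : 0 ≤ ε) (hf : f ≤ 1 / 2 - ε) :
    (1 + ε / 2) * (1 - x) ≤ 1 - codaStep x f := by
  have hgap : ε / 2 ≤ x * (x - f) := by nlinarith
  have : 1 - codaStep x f = (1 - x) * (1 + x * (x - f)) := by unfold codaStep; ring
  rw [this, mul_comm]
  exact mul_le_mul_of_nonneg_left (by linarith) (by linarith)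

section Trajectory

variable {x f : ℕ → ℝ}

lemma lt_half_of_le_of_lt_half (hstep : ∀ k, x (k + 1) = codaStep (x k) (f k))
    (hx : ∀ k, 0 ≤ x k) {T : ℕ} (hf : ∀ k ≥ T, f k ≤ 1 / 2) (hT : x T < 1 / 2) :
    ∀ k ≥ T, x k < 1 / 2 := by
  intro k hk
  induction k, hk using Nat.le_induction with
  | base => exact hT
  | succ k hk ih => rw [hstep]; exact codaStep_lt_half (hx k) ih (hf k hk)

lemma exists_ge_lt_half (hstep : ∀ k, x (k + 1) = codaStep (x k) (f k))
    (hx : ∀ k, x k ∈ Set.Ioo 0 1) {ε : ℝ} (hε : 0 < ε) {T : ℕ}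
    (hf : ∀ k ≥ T, f k ≤ 1 / 2 - ε) : ∃ k ≥ T, x k < 1 / 2 := by
  by_contra! hge
  have hgrowth : ∀ m : ℕ, (1 + ε / 2) ^ m * (1 - x T) ≤ 1 - x (T + m) := by
    intro m
    induction m with
    | zero => simp
    | succ m ih =>
      calc (1 + ε / 2) ^ (m + 1) * (1 - x T) = (1 + ε / 2) * ((1 + ε / 2) ^ m * (1 - x T)) := by
            ring
        _ ≤ (1 + ε / 2) * (1 - x (T + m)) := by gcongr
        _ ≤ 1 - x (T + (m + 1)) := by
            rw [← add_assoc, hstep]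
            exact one_add_half_mul_le_one_sub_codaStep (hge _ (by omega)) (hx _).2.le hε.le
              (hf _ (by omega))
  have hgapT : 0 < 1 - x T := by linarith [(hx T).2]
  obtain ⟨m, hm⟩ := pow_unbounded_of_one_lt (1 / (1 - x T)) (by linarith : (1 : ℝ) < 1 + ε / 2)
  rw [div_lt_iff₀ hgapT] at hm
  linarith [hgrowth m, (hx (T + m)).1]

lemma eventually_lt_half (hstep : ∀ k, x (k + 1) = codaStep (x k) (f k))
    (hx : ∀ k, x k ∈ Set.Ioo 0 1) {ε : ℝ} (hε : 0 < ε) (hf : ∀ᶠ k in atTop, f k ≤ 1 / 2 - ε) :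
    ∀ᶠ k in atTop, x k < 1 / 2 := by
  obtain ⟨T, hT⟩ := eventually_atTop.1 hf
  obtain ⟨T', hT'T, hlt⟩ := exists_ge_lt_half hstep hx hε hT
  exact eventually_atTop.2 ⟨T', lt_half_of_le_of_lt_half hstep (fun k => (hx k).1.le)
    (fun k hk => (hT k (hT'T.trans hk)).trans (by linarith)) hlt⟩

end Trajectory

section Counting

variable {ι : Type*} [DecidableEq ι] {s t : Finset ι}

lemma card_sdiff_div_card_le_half (h : #(s \ t) ≤ #(s ∩ t)) :
    (#(s \ t) : ℝ) / #s ≤ 1 / 2 := by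
  have hsplit := card_sdiff_add_card_inter s t
  refine div_le_of_le_mul₀ (by positivity) (by norm_num) ?_
  have : 2 * #(s \ t) ≤ #s := by omega
  have : (2 * #(s \ t) : ℝ) ≤ #s := by exact_mod_cast this
  linarith

lemma card_sdiff_div_card_le_half_sub (h : #(s \ t) < #(s ∩ t)) :
    (#(s \ t) : ℝ) / #s ≤ 1 / 2 - 1 / (2 * #s) := by
  have hsplit := card_sdiff_add_card_inter s t
  have hpos : (0 : ℝ) < #s := by exact_mod_cast (by omega : 0 < #s)
  have : 2 * #(s \ t) + 1 ≤ #s := by omega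
  have : (2 * #(s \ t) + 1 : ℝ) ≤ #s := by exact_mod_cast this
  rw [div_le_iff₀ hpos]
  field_simp
  linarith

end Counting

section CODA

variable {ι : Type*} [DecidableEq ι]

def actionShare (N : ι → Finset ι) (q : ι → ℕ → ℕ) (i : ι) (k : ℕ) : ℝ :=
  (∑ j ∈ N i, (q j k : ℝ)) / #(N i)

structure IsCODATrajectory (N : ι → Finset ι) (p : ι → ℕ → ℝ) (q : ι → ℕ → ℕ) : Prop where
  action_le_one : ∀ i k, q i k ≤ 1
  action_eq_zero : ∀ i k, p i k < 1 / 2 → q i k = 0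
  opinion_zero_mem : ∀ i, p i 0 ∈ Set.Ioo 0 1
  opinion_succ : ∀ i k, p i (k + 1) = codaStep (p i k) (actionShare N q i k)

namespace IsCODATrajectory

variable {N : ι → Finset ι} {p : ι → ℕ → ℝ} {q : ι → ℕ → ℕ}

lemma actionShare_le (hC : IsCODATrajectory N p q) {i : ι} {k : ℕ} {B : Finset ι}
    (hB : ∀ j ∈ N i ∩ B, p j k < 1 / 2) :
    actionShare N q i k ≤ (#(N i \ B) : ℝ) / #(N i) := by
  unfold actionShare
  gcongr
  calc ∑ j ∈ N i, (q j k : ℝ) = ∑ j ∈ N i \ B, (q j k : ℝ) := by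
        rw [← sum_inter_add_sum_sdiff (N i) B,
          sum_eq_zero fun j hj => by simp [hC.action_eq_zero j k (hB j hj)], zero_add]
    _ ≤ ∑ _j ∈ N i \ B, (1 : ℝ) := sum_le_sum fun j _ => by exact_mod_cast hC.action_le_one j k
    _ = #(N i \ B) := by simp

lemma actionShare_mem_Icc (hC : IsCODATrajectory N p q) (i : ι) (k : ℕ) :
    actionShare N q i k ∈ Set.Icc 0 1 :=
  ⟨div_nonneg (sum_nonneg fun _ _ => Nat.cast_nonneg _) (Nat.cast_nonneg _),
    (hC.actionShare_le (B := ∅) (by simp)).trans (by simpa using div_self_le_one _)⟩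

lemma opinion_mem (hC : IsCODATrajectory N p q) (i : ι) (k : ℕ) : p i k ∈ Set.Ioo 0 1 := by
  induction k with
  | zero => exact hC.opinion_zero_mem i
  | succ k ih => rw [hC.opinion_succ]; exact codaStep_mem_Ioo ih (hC.actionShare_mem_Icc i k)

lemma lt_half_of_robust (hC : IsCODATrajectory N p q) {A : Finset ι}
    (hinit : ∀ i ∈ A, p i 0 < 1 / 2) (hrob : ∀ i ∈ A, #(N i \ A) ≤ #(N i ∩ A)) (k : ℕ) :
    ∀ i ∈ A, p i k < 1 / 2 := by
  induction k with
  | zero => exact hinit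
  | succ k ih =>
    intro i hi
    rw [hC.opinion_succ]
    exact codaStep_lt_half (hC.opinion_mem i k).1.le (ih i hi)
      ((hC.actionShare_le fun j hj => ih j (mem_inter.1 hj).2).trans
        (card_sdiff_div_card_le_half (hrob i hi)))

lemma eventually_lt_half_of_majority (hC : IsCODATrajectory N p q) {B C : Finset ι}
    (hB : ∀ᶠ k in atTop, ∀ j ∈ B, p j k < 1 / 2)
    (hmaj : ∀ i ∈ C, #(N i \ B) < #(N i ∩ B)) :
    ∀ᶠ k in atTop, ∀ i ∈ C, p i k < 1 / 2 := by
  refine (eventually_all_finset C).2 fun i hi => ?_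
  have hpos : (0 : ℝ) < #(N i) := by
    have := card_sdiff_add_card_inter (N i) B
    have := hmaj i hi
    exact_mod_cast (by omega : 0 < #(N i))
  refine eventually_lt_half (hC.opinion_succ i) (hC.opinion_mem i)
    (by positivity : (0 : ℝ) < 1 / (2 * #(N i))) (hB.mono fun k hk => ?_)
  exact (hC.actionShare_le fun j hj => hk j (mem_inter.1 hj).2).trans
    (card_sdiff_div_card_le_half_sub (hmaj i hi))

end IsCODATrajectory

end CODA

end

theorem stmt_12_general
    (n : ℕ) (N : Fin n → Finset (Fin n))
    (hdeg : ∀ i, 1 ≤ (N i).card)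
    (p : Fin n → ℕ → ℝ) (q : Fin n → ℕ → ℕ)
    (hq0 : ∀ i k, (p i k < 1 / 2 ∨ (p i k = 1 / 2 ∧ p i (k - 1) < 1 / 2)) → q i k = 0)
    (hq1 : ∀ i k, ¬(p i k < 1 / 2 ∨ (p i k = 1 / 2 ∧ p i (k - 1) < 1 / 2)) → q i k = 1)
    (hupd : ∀ i k, p i (k + 1) =
      p i k + p i k * (1 - p i k) / (N i).card * ∑ j ∈ N i, ((q j k : ℝ) - p i k))
    (hp0 : ∀ i, p i 0 ∈ Set.Ioo (0 : ℝ) 1)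
    (d : ℕ) (A : ℕ → Finset (Fin n))
    (hA1zero : ∀ i ∈ A 1, q i 0 = 0)
    (hA1rob : ∀ i ∈ A 1, (N i \ A 1).card ≤ ((N i) ∩ A 1).card)
    (hdiff : ∀ h : ℕ, 1 ≤ h → h ≤ d - 1 →
      ∀ i ∈ A (h + 1), (N i \ A h).card < ((N i) ∩ A h).card) :
    (∀ h : ℕ, 1 ≤ h → h ≤ d →
      ∃ T : ℕ, (h = 1 → T = 0) ∧ ∀ k ≥ T, ∀ i ∈ A h, q i k = 0) ∧
    (∀ i : Fin n, (∃ h : ℕ, 1 ≤ h ∧ h ≤ d ∧ i ∈ A h) →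
      Filter.limsup (fun k => p i k) Filter.atTop ≤ 1 / 2) := by
  have hC : IsCODATrajectory N p q :=
    { action_le_one := fun i k => by
        by_cases h : p i k < 1 / 2 ∨ (p i k = 1 / 2 ∧ p i (k - 1) < 1 / 2)
        · simp [hq0 i k h]
        · simp [hq1 i k h]
      action_eq_zero := fun i k h => hq0 i k (Or.inl h)
      opinion_zero_mem := hp0
      opinion_succ := fun i k => by
        have : ((N i).card : ℝ) ≠ 0 := Nat.cast_ne_zero.2 (by have := hdeg i; omega)
        rw [hupd, codaStep, actionShare, sum_sub_distrib, sum_const, nsmul_eq_mul]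
        field_simp }
  -- at time `0` we have `k - 1 = 0`, so `q i 0 = 0` forces `p i 0 < 1/2`
  have hinit : ∀ i ∈ A 1, p i 0 < 1 / 2 := fun i hi => by
    by_contra! hge
    have := hq1 i 0 (by simp only [Nat.zero_sub]; push Not; exact ⟨hge, fun _ => hge⟩)
    simp [hA1zero i hi] at this
  have hbase := hC.lt_half_of_robust hinit hA1rob
  have hlayer : ∀ h, 1 ≤ h → h ≤ d → ∀ᶠ k in atTop, ∀ i ∈ A h, p i k < 1 / 2 := by
    intro h h1
    induction h, h1 using Nat.le_induction with
    | base => exact fun _ => Eventually.of_forall hbase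
    | succ g hg ih => exact fun hle =>
        hC.eventually_lt_half_of_majority (ih (by omega)) (hdiff g hg (by omega))
  refine ⟨fun h h1 hle => ?_, ?_⟩
  · rcases h1.eq_or_lt with rfl | h2
    · exact ⟨0, fun _ => rfl, fun k _ i hi => hC.action_eq_zero i k (hbase k i hi)⟩
    · obtain ⟨T, hT⟩ := eventually_atTop.1 (hlayer h h1 hle)
      exact ⟨T, by omega, fun k hk i hi => hC.action_eq_zero i k (hT k hk i hi)⟩
  · rintro i ⟨h, h1, hle, hi⟩
    exact limsup_le_of_le (isCoboundedUnder_le_of_le atTop fun k => (hC.opinion_mem i k).1.le)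
      ((hlayer h h1 hle).mono fun k hk => (hk i hi).le)

/-- CODA model, diffusion of actions: if `A 1` is a robust polarized cluster with
initial action `0`, and each agent of `A (h+1)` has strictly more neighbors in `A h`
than outside it (for `1 ≤ h ≤ d-1`), then each `A h` eventually adopts action `0`
forever (with `T_1 = 0`), and the opinions of all agents in `A 1 ∪ … ∪ A d` have
`limsup ≤ 1/2`. -/
theorem stmt_12
    (n : ℕ) (N : Fin n → Finset (Fin n))
    (hdeg : ∀ i, 1 ≤ (N i).card)
    (p : Fin n → ℕ → ℝ) (q : Fin n → ℕ → ℕ)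
    (hq0 : ∀ i k, (p i k < 1 / 2 ∨ (p i k = 1 / 2 ∧ p i (k - 1) < 1 / 2)) → q i k = 0)
    (hq1 : ∀ i k, ¬(p i k < 1 / 2 ∨ (p i k = 1 / 2 ∧ p i (k - 1) < 1 / 2)) → q i k = 1)
    (hupd : ∀ i k, p i (k + 1) =
      p i k + p i k * (1 - p i k) / (N i).card * ∑ j ∈ N i, ((q j k : ℝ) - p i k))
    (hp0 : ∀ i, p i 0 ∈ Set.Ioo (0 : ℝ) 1)
    (d : ℕ) (hd : 1 ≤ d) (A : ℕ → Finset (Fin n))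
    (hA1zero : ∀ i ∈ A 1, q i 0 = 0)
    (hA1rob : ∀ i ∈ A 1, (N i \ A 1).card ≤ ((N i) ∩ A 1).card)
    (hdiff : ∀ h : ℕ, 1 ≤ h → h ≤ d - 1 →
      ∀ i ∈ A (h + 1), (N i \ A h).card < ((N i) ∩ A h).card) :
    (∀ h : ℕ, 1 ≤ h → h ≤ d →
      ∃ T : ℕ, (h = 1 → T = 0) ∧ ∀ k ≥ T, ∀ i ∈ A h, q i k = 0) ∧
    (∀ i : Fin n, (∃ h : ℕ, 1 ≤ h ∧ h ≤ d ∧ i ∈ A h) →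
      Filter.limsup (fun k => p i k) Filter.atTop ≤ 1 / 2) :=
  stmt_12_general n N hdeg p q hq0 hq1 hupd hp0 d A hA1zero hA1rob hdiff
end

section
/- Suppose n is even, the interaction graph is complete (N_i = V \ {i} for every i), and the initial opinions are symmetric about 1/2: for every i ∈ {1,…,n/2} there exists η_i(0) ∈ (0,1/2) with p_i(0) = 1/2 − η_i(0) and p_{n/2+i}(0) = 1/2 + η_i(0). Then for every k ∈ ℕ and every i ∈ {1,…,n/2}, the opinions p_i(k) and p_{n/2+i}(k) remain symmetric about 1/2 (p_i(k) + p_{n/2+i}(k) = 1), and the numbers of agents with action 0 and action 1 remain equal: n^+(k) = n^−(k) = n/2. -/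
/-- CODA model on the complete graph with an even number of agents and initial
opinions symmetric about `1/2`: opinions remain pairwise symmetric about `1/2`
and the numbers of agents with action `0` and action `1` both remain `n/2`. -/
theorem stmt_14
    (n m : ℕ) (hm : 1 ≤ m) (hn : n = 2 * m)
    (N : Fin n → Finset (Fin n))
    (hcomplete : ∀ i, N i = Finset.univ \ {i})
    (p : Fin n → ℕ → ℝ) (q : Fin n → ℕ → ℕ)
    (hq0 : ∀ i k, (p i k < 1 / 2 ∨ (p i k = 1 / 2 ∧ p i (k - 1) < 1 / 2)) → q i k = 0)
    (hq1 : ∀ i k, ¬(p i k < 1 / 2 ∨ (p i k = 1 / 2 ∧ p i (k - 1) < 1 / 2)) → q i k = 1)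
    (hupd : ∀ i k, p i (k + 1) =
      p i k + p i k * (1 - p i k) / (N i).card * ∑ j ∈ N i, ((q j k : ℝ) - p i k))
    (hsym0 : ∀ i : Fin n, ∀ h : i.val < m, ∃ η : ℝ, η ∈ Set.Ioo (0 : ℝ) (1 / 2) ∧
      p i 0 = 1 / 2 - η ∧ p ⟨i.val + m, by omega⟩ 0 = 1 / 2 + η) :
    ∀ k : ℕ,
      (∀ i : Fin n, ∀ h : i.val < m, p i k + p ⟨i.val + m, by omega⟩ k = 1) ∧
      (Finset.univ.filter fun i : Fin n => q i k = 1).card = m ∧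
      (Finset.univ.filter fun i : Fin n => q i k = 0).card = m := by
  subst hn
  have h1m : (1:ℝ) ≤ (m:ℝ) := by exact_mod_cast hm
  set σ : Fin (2*m) → Fin (2*m) := fun i =>
    ⟨if i.val < m then i.val + m else i.val - m, by have := i.isLt; split <;> omega⟩
    with hσdef
  have hσσ : ∀ i, σ (σ i) = i := by
    intro i
    have := i.isLt
    apply Fin.ext
    simp only [hσdef]
    split_ifs <;> omega
  have hσlt : ∀ i : Fin (2*m), ∀ h : i.val < m, σ i = ⟨i.val + m, by omega⟩ := by
    intro i h
    apply Fin.ext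
    simp [hσdef, h]
  have q01 : ∀ i k, q i k = 0 ∨ q i k = 1 := by
    intro i k
    by_cases h : (p i k < 1 / 2 ∨ (p i k = 1 / 2 ∧ p i (k - 1) < 1 / 2))
    · exact Or.inl (hq0 i k h)
    · exact Or.inr (hq1 i k h)
  have hAcomm : ∀ k, (∀ i : Fin (2*m), i.val < m → p i k + p (σ i) k = 1) →
      ∀ i, p i k + p (σ i) k = 1 := by
    intro k h i
    by_cases hi : i.val < m
    · exact h i hi
    · have hlt : (σ i).val < m := by
        have := i.isLt
        simp only [hσdef]; split <;> omega
      have := h (σ i) hlt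
      rw [hσσ] at this
      linarith
  -- initial conditions
  have A0 : ∀ i, p i 0 + p (σ i) 0 = 1 := by
    apply hAcomm 0
    intro i hi
    obtain ⟨η, hη, h1, h2⟩ := hsym0 i hi
    have h2' : p (σ i) 0 = 1/2 + η := by rw [hσlt i hi]; exact h2
    linarith
  have B0 : ∀ i, p i 0 ≠ 1/2 := by
    intro i
    by_cases hi : i.val < m
    · obtain ⟨η, hη, h1, h2⟩ := hsym0 i hi
      intro hc; rw [h1] at hc; have := hη.1; linarith
    · have hi2 := i.isLt
      obtain ⟨η, hη, h1, h2⟩ := hsym0 ⟨i.val - m, by omega⟩ (show i.val - m < m by omega)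
      have hieq : i = ⟨i.val - m + m, by omega⟩ := Fin.ext (show i.val = i.val - m + m by omega)
      have h2' : p i 0 = 1/2 + η := by rw [hieq]; exact h2
      intro hc; rw [h2'] at hc; have := hη.1; linarith
  -- neighborhood facts
  have hNcard : ∀ i, (N i).card = 2*m - 1 := by
    intro i
    rw [hcomplete i, Finset.card_sdiff_of_subset (Finset.subset_univ _)]
    simp
  have hsumN : ∀ (i : Fin (2*m)) (f : Fin (2*m) → ℝ),
      ∑ j ∈ N i, f j = (∑ j, f j) - f i := by
    intro i f
    rw [hcomplete i, Finset.sum_sdiff_eq_sub (Finset.subset_univ _), Finset.sum_singleton]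
  -- simplified update
  have hupd' : ∀ (i : Fin (2*m)) k, (∑ j : Fin (2*m), (q j k : ℝ) = m) →
      p i (k+1) = p i k + p i k * (1 - p i k) / (2*(m:ℝ) - 1) *
        (((m:ℝ) - (q i k : ℝ)) - (2*(m:ℝ)-1) * p i k) := by
    intro i k hs
    have hcast : ((2*m - 1 : ℕ) : ℝ) = 2*(m:ℝ) - 1 := by
      rw [Nat.cast_sub (by omega)]; push_cast; ring
    have h1 : ∑ j ∈ N i, ((q j k:ℝ) - p i k) = ((m:ℝ) - (q i k:ℝ)) - (2*(m:ℝ)-1) * p i k := by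
      rw [hsumN i (fun j => (q j k : ℝ) - p i k)]
      rw [Finset.sum_sub_distrib, hs, Finset.sum_const, Finset.card_univ]
      simp only [Fintype.card_fin, nsmul_eq_mul]
      push_cast
      ring
    rw [hupd i k, hNcard i, hcast, h1]
  -- paired actions
  have hQ : ∀ k, (∀ i, p i k + p (σ i) k = 1) → (∀ i, p i k = 1/2 → p i (k-1) ≠ 1/2) →
      (∀ i, p i (k-1) + p (σ i) (k-1) = 1) →
      ∀ i : Fin (2*m), (q i k = 0 ∧ q (σ i) k = 1) ∨ (q i k = 1 ∧ q (σ i) k = 0) := by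
    intro k hA hB hA' i
    have hs := hA i
    have hs' := hA' i
    rcases lt_trichotomy (p i k) (1/2) with hlt|heq|hgt
    · left
      refine ⟨hq0 i k (Or.inl hlt), hq1 (σ i) k ?_⟩
      push_neg
      refine ⟨by linarith, fun he => by linarith⟩
    · have hne := hB i heq
      have hσk : p (σ i) k = 1/2 := by linarith
      rcases lt_or_gt_of_ne hne with hl|hg
      · left
        refine ⟨hq0 i k (Or.inr ⟨heq, hl⟩), hq1 (σ i) k ?_⟩
        push_neg
        refine ⟨by linarith, fun _ => by linarith⟩
      · right
        refine ⟨hq1 i k ?_, hq0 (σ i) k (Or.inr ⟨hσk, by linarith⟩)⟩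
        push_neg
        refine ⟨by linarith, fun _ => by linarith⟩
    · right
      refine ⟨hq1 i k ?_, hq0 (σ i) k (Or.inl (by linarith))⟩
      push_neg
      refine ⟨by linarith, fun h => by linarith⟩
  -- counting
  have hcount : ∀ k, (∀ i, (q i k = 0 ∧ q (σ i) k = 1) ∨ (q i k = 1 ∧ q (σ i) k = 0)) →
      (Finset.univ.filter fun i : Fin (2*m) => q i k = 1).card = m ∧
      (Finset.univ.filter fun i : Fin (2*m) => q i k = 0).card = m := by
    intro k hQk
    have hbij : (Finset.univ.filter fun i : Fin (2*m) => q i k = 1).card =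
        (Finset.univ.filter fun i : Fin (2*m) => q i k = 0).card := by
      apply Finset.card_bij' (fun i _ => σ i) (fun i _ => σ i)
      · intro a ha
        simp only [Finset.mem_filter, Finset.mem_univ, true_and] at ha ⊢
        rcases hQk a with ⟨h1, h2⟩ | ⟨h1, h2⟩ <;> omega
      · intro a ha
        simp only [Finset.mem_filter, Finset.mem_univ, true_and] at ha ⊢
        rcases hQk a with ⟨h1, h2⟩ | ⟨h1, h2⟩ <;> omega
      · intro a _; exact hσσ a
      · intro a _; exact hσσ a
    have hfe : (Finset.univ.filter fun i : Fin (2*m) => q i k = 0) =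
        (Finset.univ.filter fun i : Fin (2*m) => ¬ q i k = 1) := by
      apply Finset.filter_congr
      intro i _
      rcases q01 i k with h|h <;> simp [h]
    have htot : (Finset.univ.filter fun i : Fin (2*m) => q i k = 1).card +
        (Finset.univ.filter fun i : Fin (2*m) => q i k = 0).card = 2*m := by
      rw [hfe, Finset.card_filter_add_card_filter_not]
      simp
    omega
  -- sum of actions
  have hsumq : ∀ k, (Finset.univ.filter fun i : Fin (2*m) => q i k = 1).card = m →
      ∑ j : Fin (2*m), (q j k : ℝ) = m := by
    intro k hk
    have h1 : ∑ j : Fin (2*m), (q j k : ℝ) =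
        ∑ j ∈ Finset.univ.filter (fun i : Fin (2*m) => q i k = 1), (1:ℝ) := by
      rw [Finset.sum_filter]
      apply Finset.sum_congr rfl
      intro j _
      rcases q01 j k with h|h <;> simp [h]
    rw [h1, Finset.sum_const, hk]
    simp
  -- main induction
  have key : ∀ k, (∀ i, p i k + p (σ i) k = 1) ∧ (∀ i, p i k = 1/2 → p i (k-1) ≠ 1/2) ∧
      (∀ i, p i (k-1) + p (σ i) (k-1) = 1) := by
    intro k
    induction k with
    | zero => exact ⟨A0, fun i _ => B0 i, A0⟩
    | succ k ih =>
      obtain ⟨hA, hB, hA'⟩ := ih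
      have hQk := hQ k hA hB hA'
      have hc := hcount k hQk
      have hs := hsumq k hc.1
      have hD : (2*(m:ℝ) - 1) ≠ 0 := ne_of_gt (by linarith)
      refine ⟨?_, ?_, hA⟩
      · intro i
        have hab := hA i
        have hqs : (q (σ i) k : ℝ) = 1 - (q i k : ℝ) := by
          rcases hQk i with ⟨h1, h2⟩ | ⟨h1, h2⟩ <;> rw [h1, h2] <;> norm_num
        rw [hupd' i k hs, hupd' (σ i) k hs, hqs]
        have hb : p (σ i) k = 1 - p i k := by linarith
        rw [hb]
        field_simp
        ring
      · intro i h1 h2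
        simp only [Nat.add_sub_cancel] at h2
        have hthis := hupd' i k hs
        rw [h1, h2] at hthis
        have hpos : (0:ℝ) < 2*(m:ℝ) - 1 := by linarith
        rcases q01 i k with h|h <;> rw [h] at hthis
        · push_cast at hthis
          have he : (1/2:ℝ) * (1 - 1/2) / (2*(m:ℝ) - 1) * (((m:ℝ) - 0) - (2*(m:ℝ)-1) * (1/2))
              = (1/8) / (2*(m:ℝ)-1) := by ring
          rw [he] at hthis
          have : (0:ℝ) < (1/8) / (2*(m:ℝ)-1) := div_pos (by norm_num) hpos
          linarith
        · push_cast at hthis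
          have he : (1/2:ℝ) * (1 - 1/2) / (2*(m:ℝ) - 1) * (((m:ℝ) - 1) - (2*(m:ℝ)-1) * (1/2))
              = -((1/8) / (2*(m:ℝ)-1)) := by ring
          rw [he] at hthis
          have : (0:ℝ) < (1/8) / (2*(m:ℝ)-1) := div_pos (by norm_num) hpos
          linarith
  -- conclude
  intro k
  obtain ⟨hA, hB, hA'⟩ := key k
  have hQk := hQ k hA hB hA'
  have hc := hcount k hQk
  refine ⟨?_, hc.1, hc.2⟩
  intro i hi
  have := hA i
  rw [hσlt i hi] at this
  exact this
end

section
/- For every integer n ≥ 2, the cubic polynomial g(x) = x³ + x²/(2(n−1)) + (3/4)x − 1/(8(n−1)) has exactly one positive real root ε*, and this root satisfies 1/(8(n−1)) < ε* < 1/(6(n−1)). -/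
/-- For every integer `n ≥ 2`, the cubic `g(x) = x³ + x²/(2(n-1)) + (3/4)x - 1/(8(n-1))`
has exactly one positive real root `ε*`, and `1/(8(n-1)) < ε* < 1/(6(n-1))`. -/
theorem stmt_16
    (n : ℕ) (hn : 2 ≤ n)
    (g : ℝ → ℝ)
    (hg : ∀ x, g x = x ^ 3 + x ^ 2 / (2 * ((n : ℝ) - 1)) + 3 / 4 * x -
      1 / (8 * ((n : ℝ) - 1))) :
    ∃ εstar : ℝ, (0 < εstar ∧ g εstar = 0) ∧
      (∀ y : ℝ, 0 < y → g y = 0 → y = εstar) ∧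
      1 / (8 * ((n : ℝ) - 1)) < εstar ∧ εstar < 1 / (6 * ((n : ℝ) - 1)) := by
  set c : ℝ := (n : ℝ) - 1 with hc
  have hc1 : (1 : ℝ) ≤ c := by
    have h2 : (2 : ℝ) ≤ (n : ℝ) := by exact_mod_cast hn
    rw [hc]; linarith
  have hc0 : (0 : ℝ) < c := by linarith
  set a : ℝ := 1 / (8 * c) with ha
  set b : ℝ := 1 / (6 * c) with hb
  have ha0 : 0 < a := by positivity
  have hab : a < b := by
    rw [ha, hb]
    apply div_lt_div_of_pos_left one_pos (by positivity)
    nlinarith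
  have hmono : ∀ x y : ℝ, 0 ≤ x → x < y → g x < g y := by
    intro x y hx hxy
    rw [hg, hg]
    have h1 : x ^ 3 < y ^ 3 := by
      exact pow_lt_pow_left₀ hxy hx (by norm_num)
    have h2 : x ^ 2 / (2 * c) ≤ y ^ 2 / (2 * c) := by
      gcongr
    linarith
  have hga : g a < 0 := by
    rw [hg, ha]
    have heq : (1 / (8 * c)) ^ 3 + (1 / (8 * c)) ^ 2 / (2 * c) + 3 / 4 * (1 / (8 * c))
        - 1 / (8 * c) = (5 - 16 * c ^ 2) / (512 * c ^ 3) := by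
      field_simp
      ring
    rw [heq]
    apply div_neg_of_neg_of_pos
    · nlinarith
    · positivity
  have hgb : 0 < g b := by
    rw [hg, hb]
    have : 0 < (1 / (6 * c)) ^ 3 + (1 / (6 * c)) ^ 2 / (2 * c) := by positivity
    have heq : 3 / 4 * (1 / (6 * c)) - 1 / (8 * c) = 0 := by
      field_simp
      ring
    linarith
  have hcont : Continuous g := by
    have : g = fun x => x ^ 3 + x ^ 2 / (2 * c) + 3 / 4 * x - 1 / (8 * c) :=
      funext hg
    rw [this]; fun_prop
  obtain ⟨ε, hεmem, hεz⟩ : ∃ ε ∈ Set.Icc a b, g ε = 0 := by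
    have := intermediate_value_Icc hab.le hcont.continuousOn
    have h0 : (0 : ℝ) ∈ Set.Icc (g a) (g b) := ⟨hga.le, hgb.le⟩
    exact this h0
  obtain ⟨hεa, hεb⟩ := hεmem
  have hεa' : a < ε := lt_of_le_of_ne hεa (by rintro rfl; exact absurd hεz (ne_of_lt hga))
  have hεb' : ε < b := lt_of_le_of_ne hεb (by rintro rfl; exact absurd hεz (ne_of_gt hgb))
  have hε0 : 0 < ε := lt_trans ha0 hεa'
  refine ⟨ε, ⟨hε0, hεz⟩, ?_, hεa', hεb'⟩
  intro y hy hgy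
  by_contra hne
  rcases lt_or_gt_of_ne hne with h | h
  · have := hmono y ε hy.le h
    rw [hgy, hεz] at this; exact lt_irrefl 0 this
  · have := hmono ε y hε0.le h
    rw [hgy, hεz] at this; exact lt_irrefl 0 this
end

section
/- Suppose the interaction graph is the undirected ring on V = {1,…,n} with n even, n ≥ 4 (indices mod n, N_i = {i−1, i+1}). Let σ ∈ (0,1/2) satisfy the fixed-point equation 1/2 − σ = (1/2 + σ) − (1/2 + σ)²(1/2 − σ), and suppose the initial opinions alternate around the ring: p_i(0) = 1/2 + σ for i odd and p_i(0) = 1/2 − σ for i even (i.e., q_i(0) = 1 − q_{i+1}(0) for all i). Then under the CODA update, opinions flip synchronously at every step: p_i(k+1) = 1 − p_i(k) for all i ∈ V and k ∈ ℕ; in particular p_i(k) ∈ {1/2 − σ, 1/2 + σ} for all i and k, and n^+(k) = n^−(k) = n/2 for all k. -/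
/-!
On an even ring, the alternating profile `p i k = 1/2 + σ` if `i + k` is odd and `1/2 - σ`
otherwise reproduces itself with the roles swapped: each agent's two neighbours lie in the
other parity class, so they agree and play the action opposite to the agent's own, and the
fixed-point equation for `σ` says precisely that one CODA step with unanimous opposing
neighbours carries `1/2 ∓ σ` to `1/2 ± σ`. Shifting by one position exchanges the two
parity classes, so each holds half the agents.
-/

open Finset

section EvenRing

variable {n : ℕ} [NeZero n]

theorem Fin.val_add_one_mod_two (hn : Even n) (i : Fin n) :
    (i + 1).val % 2 = (i.val + 1) % 2 := by
  have hmod : ∀ a, a % n % 2 = a % 2 := fun a => Nat.mod_mod_of_dvd a (even_iff_two_dvd.mp hn)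
  rw [Fin.val_add, Fin.val_one', hmod, Nat.add_mod, hmod, ← Nat.add_mod]

theorem Fin.val_sub_one_mod_two (hn : Even n) (i : Fin n) :
    (i - 1).val % 2 = (i.val + 1) % 2 := by
  have h := Fin.val_add_one_mod_two hn (i - 1)
  rw [sub_add_cancel] at h
  omega

theorem Fin.card_filter_val_add_mod_two {m : ℕ} (hn : n = 2 * m) (k : ℕ) :
    #{i : Fin n | (i.val + k) % 2 = 1} = m ∧ #{i : Fin n | (i.val + k) % 2 = 0} = m := by
  have heven : Even n := ⟨m, by omega⟩
  have hshift : #{i : Fin n | (i.val + k) % 2 = 1} = #{i : Fin n | ¬(i.val + k) % 2 = 1} := by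
    refine Finset.card_bij' (fun a _ => a + 1) (fun b _ => b - 1) ?_ ?_
      (fun a _ => add_sub_cancel_right a 1) (fun b _ => sub_add_cancel b 1)
    · intro a ha
      simp only [mem_filter, mem_univ, true_and] at ha ⊢
      have := Fin.val_add_one_mod_two heven a
      omega
    · intro b hb
      simp only [mem_filter, mem_univ, true_and] at hb ⊢
      have := Fin.val_sub_one_mod_two heven b
      omega
  have htotal := Finset.card_filter_add_card_filter_not (s := (univ : Finset (Fin n)))
    (p := fun i : Fin n => (i.val + k) % 2 = 1)
  have hzero : #{i : Fin n | (i.val + k) % 2 = 0} = #{i : Fin n | ¬(i.val + k) % 2 = 1} := by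
    congr 1
    exact Finset.filter_congr fun i _ => by omega
  rw [card_univ, Fintype.card_fin] at htotal
  omega

end EvenRing

theorem div_card_mul_sum_sub_of_forall_eq {ι : Type*} {s : Finset ι} (hs : s.Nonempty)
    {f : ι → ℝ} {c : ℝ} (hf : ∀ j ∈ s, f j = c) (a x : ℝ) :
    a / #s * ∑ j ∈ s, (f j - x) = a * (c - x) := by
  have hcard : (#s : ℝ) ≠ 0 := by exact_mod_cast hs.card_pos.ne'
  rw [Finset.sum_congr rfl fun j hj => by rw [hf j hj], sum_const, nsmul_eq_mul]
  field_simp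

theorem coda_step_low_of_fixedPoint {σ : ℝ}
    (hfix : 1 / 2 - σ = (1 / 2 + σ) - (1 / 2 + σ) ^ 2 * (1 / 2 - σ)) :
    (1 / 2 - σ) + (1 / 2 - σ) * (1 - (1 / 2 - σ)) * (1 - (1 / 2 - σ)) = 1 / 2 + σ := by
  linear_combination hfix

theorem coda_step_high_of_fixedPoint {σ : ℝ}
    (hfix : 1 / 2 - σ = (1 / 2 + σ) - (1 / 2 + σ) ^ 2 * (1 / 2 - σ)) :
    (1 / 2 + σ) + (1 / 2 + σ) * (1 - (1 / 2 + σ)) * (0 - (1 / 2 + σ)) = 1 / 2 - σ := by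
  linear_combination -hfix

noncomputable def alternatingOpinion {n : ℕ} (σ : ℝ) (i : Fin n) (k : ℕ) : ℝ :=
  if (i.val + k) % 2 = 1 then 1 / 2 + σ else 1 / 2 - σ

theorem alternatingOpinion_succ {n : ℕ} (σ : ℝ) (i : Fin n) (k : ℕ) :
    alternatingOpinion σ i (k + 1) = 1 - alternatingOpinion σ i k := by
  unfold alternatingOpinion
  split_ifs <;> first | omega | ring

theorem alternatingOpinion_eq_or {n : ℕ} (σ : ℝ) (i : Fin n) (k : ℕ) :
    alternatingOpinion σ i k = 1 / 2 - σ ∨ alternatingOpinion σ i k = 1 / 2 + σ := by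
  unfold alternatingOpinion
  split_ifs <;> simp

section Coda

variable {n : ℕ} {p : Fin n → ℕ → ℝ} {q : Fin n → ℕ → ℕ} {σ : ℝ}

theorem coda_action_eq_of_alternating (hσ : 0 < σ)
    (hq0 : ∀ i k, (p i k < 1 / 2 ∨ (p i k = 1 / 2 ∧ p i (k - 1) < 1 / 2)) → q i k = 0)
    (hq1 : ∀ i k, ¬(p i k < 1 / 2 ∨ (p i k = 1 / 2 ∧ p i (k - 1) < 1 / 2)) → q i k = 1)
    {k : ℕ} (hk : ∀ i, p i k = alternatingOpinion σ i k) (i : Fin n) :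
    q i k = (i.val + k) % 2 := by
  have hp := hk i
  unfold alternatingOpinion at hp
  split_ifs at hp with hodd
  · rw [hodd]
    exact hq1 i k (by rw [hp]; intro h; rcases h with h | ⟨h, -⟩ <;> linarith)
  · rw [show (i.val + k) % 2 = 0 by omega]
    exact hq0 i k (Or.inl (by linarith))

theorem coda_ring_eq_alternating [NeZero n] (heven : Even n) {N : Fin n → Finset (Fin n)}
    (hring : ∀ i : Fin n, N i = {i - 1, i + 1})
    (hq0 : ∀ i k, (p i k < 1 / 2 ∨ (p i k = 1 / 2 ∧ p i (k - 1) < 1 / 2)) → q i k = 0)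
    (hq1 : ∀ i k, ¬(p i k < 1 / 2 ∨ (p i k = 1 / 2 ∧ p i (k - 1) < 1 / 2)) → q i k = 1)
    (hupd : ∀ i k, p i (k + 1) =
      p i k + p i k * (1 - p i k) / (N i).card * ∑ j ∈ N i, ((q j k : ℝ) - p i k))
    (hσ : 0 < σ) (hfix : 1 / 2 - σ = (1 / 2 + σ) - (1 / 2 + σ) ^ 2 * (1 / 2 - σ))
    (hinit : ∀ i, p i 0 = alternatingOpinion σ i 0) (k : ℕ) (i : Fin n) :
    p i k = alternatingOpinion σ i k := by
  induction k generalizing i with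
  | zero => exact hinit i
  | succ k ih =>
    have hq := coda_action_eq_of_alternating hσ hq0 hq1 ih
    have hneighbours : ∀ j ∈ N i, (q j k : ℝ) = ((i.val + 1 + k) % 2 : ℕ) := by
      intro j hj
      rw [hring i, mem_insert, mem_singleton] at hj
      rcases hj with rfl | rfl
      · have := Fin.val_sub_one_mod_two heven i
        rw [hq]; congr 1; omega
      · have := Fin.val_add_one_mod_two heven i
        rw [hq]; congr 1; omega
    rw [hupd, div_card_mul_sum_sub_of_forall_eq (by simp [hring]) hneighbours, ih,
      alternatingOpinion_succ]
    unfold alternatingOpinion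
    by_cases hodd : (i.val + k) % 2 = 1
    · rw [if_pos hodd, show (i.val + 1 + k) % 2 = 0 by omega, Nat.cast_zero,
        coda_step_high_of_fixedPoint hfix]
      ring
    · rw [if_neg hodd, show (i.val + 1 + k) % 2 = 1 by omega, Nat.cast_one,
        coda_step_low_of_fixedPoint hfix]
      ring

end Coda

theorem stmt_19_general
    (n m : ℕ) (hn : n = 2 * m) [NeZero n]
    (N : Fin n → Finset (Fin n))
    (hring : ∀ i : Fin n, N i = {i - 1, i + 1})
    (p : Fin n → ℕ → ℝ) (q : Fin n → ℕ → ℕ)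
    (hq0 : ∀ i k, (p i k < 1 / 2 ∨ (p i k = 1 / 2 ∧ p i (k - 1) < 1 / 2)) → q i k = 0)
    (hq1 : ∀ i k, ¬(p i k < 1 / 2 ∨ (p i k = 1 / 2 ∧ p i (k - 1) < 1 / 2)) → q i k = 1)
    (hupd : ∀ i k, p i (k + 1) =
      p i k + p i k * (1 - p i k) / (N i).card * ∑ j ∈ N i, ((q j k : ℝ) - p i k))
    (σ : ℝ) (hσ : σ ∈ Set.Ioo (0 : ℝ) (1 / 2))
    (hfix : 1 / 2 - σ = (1 / 2 + σ) - (1 / 2 + σ) ^ 2 * (1 / 2 - σ))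
    (hinit : ∀ i : Fin n,
      (Odd i.val → p i 0 = 1 / 2 + σ) ∧ (Even i.val → p i 0 = 1 / 2 - σ)) :
    (∀ i : Fin n, ∀ k : ℕ, p i (k + 1) = 1 - p i k) ∧
    (∀ i : Fin n, ∀ k : ℕ, p i k = 1 / 2 - σ ∨ p i k = 1 / 2 + σ) ∧
    (∀ k : ℕ, (Finset.univ.filter fun i : Fin n => q i k = 1).card = m ∧
      (Finset.univ.filter fun i : Fin n => q i k = 0).card = m) := by
  have hinit' : ∀ i, p i 0 = alternatingOpinion σ i 0 := by
    intro i
    unfold alternatingOpinion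
    rcases Nat.even_or_odd i.val with he | ho
    · rw [if_neg (by simpa [Nat.even_iff] using he)]; exact (hinit i).2 he
    · rw [if_pos (by simpa [Nat.odd_iff] using ho)]; exact (hinit i).1 ho
  have hp := coda_ring_eq_alternating ⟨m, by omega⟩ hring hq0 hq1 hupd hσ.1 hfix hinit'
  refine ⟨fun i k => by rw [hp, hp, alternatingOpinion_succ],
    fun i k => hp k i ▸ alternatingOpinion_eq_or σ i k, fun k => ?_⟩
  have hq := coda_action_eq_of_alternating hσ.1 hq0 hq1 (hp k)
  simp only [hq]
  exact Fin.card_filter_val_add_mod_two hn k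

/-- CODA model on the undirected ring with `n` even, `n ≥ 4`, and alternating
initial opinions `1/2 ± σ` where `σ` solves the fixed-point equation
`1/2 - σ = (1/2 + σ) - (1/2 + σ)²(1/2 - σ)`: opinions flip synchronously at every
step, stay in `{1/2 - σ, 1/2 + σ}`, and `n^+(k) = n^-(k) = n/2` for all `k`. -/
theorem stmt_19
    (n m : ℕ) (hm : 2 ≤ m) (hn : n = 2 * m) [NeZero n]
    (N : Fin n → Finset (Fin n))
    (hring : ∀ i : Fin n, N i = {i - 1, i + 1})
    (p : Fin n → ℕ → ℝ) (q : Fin n → ℕ → ℕ)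
    (hq0 : ∀ i k, (p i k < 1 / 2 ∨ (p i k = 1 / 2 ∧ p i (k - 1) < 1 / 2)) → q i k = 0)
    (hq1 : ∀ i k, ¬(p i k < 1 / 2 ∨ (p i k = 1 / 2 ∧ p i (k - 1) < 1 / 2)) → q i k = 1)
    (hupd : ∀ i k, p i (k + 1) =
      p i k + p i k * (1 - p i k) / (N i).card * ∑ j ∈ N i, ((q j k : ℝ) - p i k))
    (σ : ℝ) (hσ : σ ∈ Set.Ioo (0 : ℝ) (1 / 2))
    (hfix : 1 / 2 - σ = (1 / 2 + σ) - (1 / 2 + σ) ^ 2 * (1 / 2 - σ))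
    (hinit : ∀ i : Fin n,
      (Odd i.val → p i 0 = 1 / 2 + σ) ∧ (Even i.val → p i 0 = 1 / 2 - σ)) :
    (∀ i : Fin n, ∀ k : ℕ, p i (k + 1) = 1 - p i k) ∧
    (∀ i : Fin n, ∀ k : ℕ, p i k = 1 / 2 - σ ∨ p i k = 1 / 2 + σ) ∧
    (∀ k : ℕ, (Finset.univ.filter fun i : Fin n => q i k = 1).card = m ∧
      (Finset.univ.filter fun i : Fin n => q i k = 0).card = m) :=
  stmt_19_general n m hn N hring p q hq0 hq1 hupd σ hσ hfix hinit
end
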